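/- arXiv:1509.07843 — 7 statements merged into one kernel-verified Lean document; each statement's English description precedes it below -/
import Mathlib

section
/- The cubic polynomial P(z) = z(1+z)^2 is injective on the open ball {z ∈ ℂ : |z| < 1/3}. -/
/-! `P(z) - P(w) = (z - w) * ((1 + z + w)^2 - z * w)`, and on the ball of radius `1/3` the
second factor cannot vanish: `‖1 + z + w‖ > 1/3` forces `‖(1 + z + w)^2‖ > 1/9 > ‖z * w‖`. -/

theorem mul_one_add_sq_sub_mul_one_add_sq {R : Type*} [CommRing R] (z w : R) :
    z * (1 + z) ^ 2 - w * (1 + w) ^ 2 = (z - w) * ((1 + z + w) ^ 2 - z * w) := by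
  ring

section NormBounds

variable {𝕜 : Type*}

theorem one_third_lt_norm_one_add_add [NormedRing 𝕜] [NormOneClass 𝕜] {z w : 𝕜}
    (hz : ‖z‖ < 1 / 3) (hw : ‖w‖ < 1 / 3) : 1 / 3 < ‖1 + z + w‖ := by
  have h : ‖(1 : 𝕜)‖ ≤ ‖1 + z + w‖ + (‖z‖ + ‖w‖) :=
    calc ‖(1 : 𝕜)‖ = ‖1 + z + w - (z + w)‖ := by rw [add_assoc, add_sub_cancel_right]
      _ ≤ ‖1 + z + w‖ + ‖z + w‖ := norm_sub_le _ _
      _ ≤ ‖1 + z + w‖ + (‖z‖ + ‖w‖) := by gcongr; exact norm_add_le z w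
  rw [norm_one] at h
  linarith

theorem sq_one_add_add_ne_mul [NormedField 𝕜] {z w : 𝕜}
    (hz : ‖z‖ < 1 / 3) (hw : ‖w‖ < 1 / 3) : (1 + z + w) ^ 2 ≠ z * w := by
  intro h
  have hsq : 1 / 9 < ‖(1 + z + w) ^ 2‖ := by
    have := one_third_lt_norm_one_add_add hz hw
    rw [norm_pow]
    nlinarith
  have hmul : ‖z * w‖ < 1 / 9 := by
    rw [norm_mul]
    nlinarith [norm_nonneg z, norm_nonneg w]
  rw [h] at hsq
  linarith

end NormBounds

/-- The cubic polynomial `P(z) = z * (1 + z)^2` is injective on the open ball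
of radius `1/3` centered at the origin. -/
theorem cubic_injOn_ball :
    Set.InjOn (fun z : ℂ => z * (1 + z) ^ 2) (Metric.ball (0 : ℂ) (1 / 3)) := by
  intro z hz w hw (hzw : z * (1 + z) ^ 2 = w * (1 + w) ^ 2)
  rw [mem_ball_zero_iff] at hz hw
  have hfactor : (z - w) * ((1 + z + w) ^ 2 - z * w) = 0 := by
    rw [← mul_one_add_sq_sub_mul_one_add_sq, hzw, sub_self]
  have hsecond : (1 + z + w) ^ 2 - z * w ≠ 0 := sub_ne_zero.mpr (sq_one_add_add_ne_mul hz hw)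
  exact sub_eq_zero.mp ((mul_eq_zero.mp hfactor).resolve_right hsecond)
end

section
/- Let n ≥ 1, let b₁, …, b_n ≥ 2 be integers and ε₁, …, ε_n ∈ {+1, −1} be signs, and assume that if b₁ = 2 and n ≥ 2 then ε₂ = +1. Then the finite signed continued fraction [⟨b_i : ε_i⟩_{i=1}^n] is well defined (all intermediate denominators are nonzero) and satisfies |[⟨b_i : ε_i⟩_{i=1}^n]| ≤ 1/2. -/
/-- The finite signed continued fraction `ε_k/(b_k + ε_{k+1}/(b_{k+1} + ⋯))`,
starting at index `k` and of length `m` (indices are 0-based). -/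
noncomputable def scf (b ε : ℕ → ℤ) : ℕ → ℕ → ℝ
  | _, 0 => 0
  | k, m + 1 => (ε k : ℝ) / ((b k : ℝ) + scf b ε (k + 1) m)

/-- The signed continued fraction starting at index `k` of length `m` is well
defined: all intermediate denominators are nonzero. -/
def scfWD (b ε : ℕ → ℤ) : ℕ → ℕ → Prop
  | _, 0 => True
  | k, m + 1 => ((b k : ℝ) + scf b ε (k + 1) m ≠ 0) ∧ scfWD b ε (k + 1) m

/-!
Every tail `t` of such a continued fraction satisfies `|t| < 1`, so each denominator `b + t`
exceeds `1`. For the whole fraction it remains to see `b₁ + t ≥ 2`: this is clear if `b₁ ≥ 3`,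
and if `b₁ = 2` the condition `ε₂ = +1` makes the tail `t` nonnegative.
-/

section

variable (b ε : ℕ → ℤ)

theorem scf_succ (k m : ℕ) : scf b ε k (m + 1) = ε k / (b k + scf b ε (k + 1) m) := rfl

theorem abs_sign_div {e : ℤ} (he : e = 1 ∨ e = -1) {d : ℝ} (hd : 0 < d) :
    |(e : ℝ) / d| = d⁻¹ := by
  rcases he with rfl | rfl <;> simp [abs_div, abs_of_pos hd]

theorem scfWD_and_abs_scf_lt_one (m k : ℕ) (hb : ∀ i, k ≤ i → i < k + m → 2 ≤ b i)
    (hε : ∀ i, k ≤ i → i < k + m → ε i = 1 ∨ ε i = -1) :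
    scfWD b ε k m ∧ |scf b ε k m| < 1 := by
  induction m generalizing k with
  | zero => simp [scf, scfWD]
  | succ m ih =>
    obtain ⟨wd, ht⟩ := ih (k + 1) (fun i _ _ => hb i (by omega) (by omega))
      (fun i _ _ => hε i (by omega) (by omega))
    have hbk : (2 : ℝ) ≤ b k := by exact_mod_cast hb k le_rfl (by omega)
    have hd : 1 < (b k : ℝ) + scf b ε (k + 1) m := by linarith [(abs_lt.mp ht).1]
    refine ⟨⟨by linarith, wd⟩, ?_⟩
    rw [scf_succ, abs_sign_div (hε k le_rfl (by omega)) (by linarith)]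
    exact inv_lt_one_of_one_lt₀ hd

theorem scf_pos_of_sign_eq_one (m k : ℕ) (hb : ∀ i, k ≤ i → i ≤ k + m → 2 ≤ b i)
    (hε : ∀ i, k < i → i ≤ k + m → ε i = 1 ∨ ε i = -1) (hεk : ε k = 1) :
    0 < scf b ε k (m + 1) := by
  have ht := (scfWD_and_abs_scf_lt_one b ε m (k + 1) (fun i _ _ => hb i (by omega) (by omega))
    (fun i _ _ => hε i (by omega) (by omega))).2
  have hbk : (2 : ℝ) ≤ b k := by exact_mod_cast hb k le_rfl (by omega)
  rw [scf_succ, hεk, Int.cast_one]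
  exact one_div_pos.mpr (by linarith [(abs_lt.mp ht).1])

end

/-- A finite signed continued fraction with entries `b_i ≥ 2` and signs `±1`,
such that `ε₂ = +1` whenever `b₁ = 2` (and `n ≥ 2`), is well defined and its
value lies in `[-1/2, 1/2]`. (Indices are 0-based.) -/
theorem scf_wellDefined_and_small (n : ℕ) (hn : 1 ≤ n) (b ε : ℕ → ℤ)
    (hb : ∀ i < n, 2 ≤ b i) (hε : ∀ i < n, ε i = 1 ∨ ε i = -1)
    (h2 : b 0 = 2 → 2 ≤ n → ε 1 = 1) :
    scfWD b ε 0 n ∧ |scf b ε 0 n| ≤ 1 / 2 := by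
  obtain ⟨m, rfl⟩ : ∃ m, n = m + 1 := ⟨n - 1, by omega⟩
  set t := scf b ε 1 m
  obtain ⟨wd, ht⟩ := scfWD_and_abs_scf_lt_one b ε m 1 (fun i _ _ => hb i (by omega))
    (fun i _ _ => hε i (by omega))
  have hd : 2 ≤ (b 0 : ℝ) + t := by
    rcases (hb 0 (by omega)).eq_or_lt with hb0 | hb0
    · have ht0 : 0 ≤ t := by
        cases m with
        | zero => exact le_rfl
        | succ m =>
          exact (scf_pos_of_sign_eq_one b ε m 1 (fun i _ _ => hb i (by omega))
            (fun i _ _ => hε i (by omega)) (h2 hb0.symm (by omega))).le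
      have : (b 0 : ℝ) = 2 := by exact_mod_cast hb0.symm
      linarith
    · have : (3 : ℝ) ≤ b 0 := by exact_mod_cast hb0
      linarith [(abs_lt.mp ht).1]
  refine ⟨⟨by linarith, wd⟩, ?_⟩
  rw [scf_succ, abs_sign_div (hε 0 (by omega)) (by linarith), one_div]
  exact inv_anti₀ two_pos hd
end

section
/- There exists a constant C₀ > 0 such that for every integer n ≥ 1, all integers b₁, …, b_n ≥ 2 satisfying b_{j+1} ≥ b_j² for 1 ≤ j ≤ n−1, and all signs ε₁, …, ε_n ∈ {+1, −1}, setting t_j = |[⟨b_i : ε_i⟩_{i=j}^n]| for 1 ≤ j ≤ n, one has t_n / t₁ ≤ C₀ · ∏_{i=1}^{n−1} t_i (the empty product for n = 1 being 1). -/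
open Finset

lemma prod_add_one_le_three_mul_sub_one {R : Type*} [CommRing R] [LinearOrder R]
    [IsStrictOrderedRing R] {b : ℕ → R} (h₀ : 2 ≤ b 0) :
    ∀ {k : ℕ}, (∀ j < k, b j ^ 2 ≤ b (j + 1)) →
      (b 0 + 1) * ∏ i ∈ range k, (b i + 1) ≤ 3 * (b k - 1)
  | 0, _ => by simp only [range_zero, prod_empty, mul_one]; linarith
  | k + 1, hg => by
    have hbk : 0 ≤ b k + 1 := by
      cases k with
      | zero => linarith
      | succ j => nlinarith [hg j (by omega), sq_nonneg (b j)]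
    calc (b 0 + 1) * ∏ i ∈ range (k + 1), (b i + 1)
        = ((b 0 + 1) * ∏ i ∈ range k, (b i + 1)) * (b k + 1) := by
          rw [prod_range_succ, mul_assoc]
      _ ≤ 3 * (b k - 1) * (b k + 1) :=
          mul_le_mul_of_nonneg_right
            (prod_add_one_le_three_mul_sub_one h₀ fun j hj => hg j (by omega)) hbk
      _ = 3 * (b k ^ 2 - 1) := by ring
      _ ≤ 3 * (b (k + 1) - 1) := by linarith [hg k (by omega)]

lemma abs_scf_succ {b ε : ℕ → ℤ} {k : ℕ} (hε : |ε k| = 1) (m : ℕ) :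
    |scf b ε k (m + 1)| = 1 / |(b k : ℝ) + scf b ε (k + 1) m| := by
  rw [scf, abs_div, ← Int.cast_abs, hε, Int.cast_one]

lemma abs_scf_succ_mem_Icc {b ε : ℕ → ℤ} {k m : ℕ} (hb : 2 ≤ b k) (hε : |ε k| = 1)
    (htail : |scf b ε (k + 1) m| ≤ 1) :
    |scf b ε k (m + 1)| ∈ Set.Icc (1 / ((b k : ℝ) + 1)) 1 := by
  have hbk : (2 : ℝ) ≤ b k := by exact_mod_cast hb
  obtain ⟨hlo, hhi⟩ := abs_le.1 htail
  rw [abs_scf_succ hε, abs_of_pos (by linarith)]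
  exact ⟨one_div_le_one_div_of_le (by linarith) (by linarith),
    (div_le_one (by linarith)).2 (by linarith)⟩

lemma abs_scf_le_one {b ε : ℕ → ℤ} :
    ∀ {k m : ℕ}, (∀ i, k ≤ i → i < k + m → 2 ≤ b i) →
      (∀ i, k ≤ i → i < k + m → |ε i| = 1) → |scf b ε k m| ≤ 1
  | _, 0, _, _ => by simp [scf]
  | k, m + 1, hb, hε =>
    (abs_scf_succ_mem_Icc (hb k le_rfl (by omega)) (hε k le_rfl (by omega))
      (abs_scf_le_one (fun i h₁ h₂ => hb i (by omega) (by omega))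
        fun i h₁ h₂ => hε i (by omega) (by omega))).2

lemma one_div_add_one_le_abs_scf_succ {b ε : ℕ → ℤ} {k m : ℕ}
    (hb : ∀ i, k ≤ i → i < k + (m + 1) → 2 ≤ b i)
    (hε : ∀ i, k ≤ i → i < k + (m + 1) → |ε i| = 1) :
    1 / ((b k : ℝ) + 1) ≤ |scf b ε k (m + 1)| :=
  (abs_scf_succ_mem_Icc (hb k le_rfl (by omega)) (hε k le_rfl (by omega))
    (abs_scf_le_one (fun i h₁ h₂ => hb i (by omega) (by omega))
      fun i h₁ h₂ => hε i (by omega) (by omega))).1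

lemma abs_scf_one {b ε : ℕ → ℤ} {k : ℕ} (hb : 0 < b k) (hε : |ε k| = 1) :
    |scf b ε k 1| = 1 / (b k : ℝ) := by
  rw [abs_scf_succ hε, scf, add_zero, abs_of_pos (by exact_mod_cast hb)]

/-- There is a universal constant `C₀ > 0` such that for every signed continued
fraction with entries `b_j ≥ 2` satisfying the quadratic growth `b_{j+1} ≥ b_j²`
and signs `±1`, the absolute values `t_j` of the tails starting at index `j`
satisfy `t_n / t₁ ≤ C₀ ∏_{i=1}^{n-1} t_i` (0-based: tail `j` is
`|scf b ε j (n - j)|`). -/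
theorem scf_tail_quadratic_growth_estimate :
    ∃ C₀ : ℝ, 0 < C₀ ∧
      ∀ n : ℕ, 1 ≤ n → ∀ b ε : ℕ → ℤ,
        (∀ i < n, 2 ≤ b i) →
        (∀ j, j + 1 < n → (b j) ^ 2 ≤ b (j + 1)) →
        (∀ i < n, ε i = 1 ∨ ε i = -1) →
        |scf b ε (n - 1) 1| / |scf b ε 0 n| ≤
          C₀ * ∏ i ∈ Finset.range (n - 1), |scf b ε i (n - i)| := by
  refine ⟨3, by norm_num, fun n hn b ε hb hg hε => ?_⟩
  obtain ⟨N, rfl⟩ : ∃ N, n = N + 1 := ⟨n - 1, by omega⟩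
  have hε₁ : ∀ i < N + 1, |ε i| = 1 := fun i hi => by rcases hε i hi with h | h <;> simp [h]
  have hbR : ∀ i < N + 1, (2 : ℝ) ≤ b i := fun i hi => by exact_mod_cast hb i hi
  have hbN : (0 : ℝ) < b N := by linarith [hbR N (by omega)]
  have hrecip : ∀ i < N + 1, 0 < 1 / ((b i : ℝ) + 1) := fun i hi =>
    one_div_pos.2 (by linarith [hbR i hi])
  have htail : ∀ i < N + 1, 1 / ((b i : ℝ) + 1) ≤ |scf b ε i (N + 1 - i)| := fun i hi => by
    obtain ⟨m, hm⟩ : ∃ m, N + 1 - i = m + 1 := ⟨N - i, by omega⟩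
    rw [hm]
    exact one_div_add_one_le_abs_scf_succ (fun j _ hj => hb j (by omega))
      (fun j _ hj => hε₁ j (by omega))
  have hprod : ((b 0 : ℝ) + 1) * ∏ i ∈ range N, ((b i : ℝ) + 1) ≤ 3 * b N := by
    have := prod_add_one_le_three_mul_sub_one (b := fun i => (b i : ℝ)) (k := N)
      (by exact_mod_cast hb 0 (by omega)) (fun j hj => by exact_mod_cast hg j (by omega))
    linarith
  have hQ : 0 < ∏ i ∈ range N, ((b i : ℝ) + 1) :=
    prod_pos fun i hi => by linarith [hbR i (by simp at hi; omega)]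
  rw [Nat.add_sub_cancel, abs_scf_one (by linarith [hb N (by omega)]) (hε₁ N (by omega))]
  calc 1 / (b N : ℝ) / |scf b ε 0 (N + 1)| ≤ 1 / (b N : ℝ) / (1 / ((b 0 : ℝ) + 1)) :=
        div_le_div_of_nonneg_left (by positivity) (hrecip 0 (by omega)) (htail 0 (by omega))
    _ = ((b 0 : ℝ) + 1) / b N := by field_simp
    _ ≤ 3 / ∏ i ∈ range N, ((b i : ℝ) + 1) := by
        rw [div_le_div_iff₀ hbN hQ]
        linarith
    _ = 3 * ∏ i ∈ range N, (1 / ((b i : ℝ) + 1)) := by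
        rw [prod_div_distrib, prod_const_one, mul_one_div]
    _ ≤ 3 * ∏ i ∈ range N, |scf b ε i (N + 1 - i)| :=
        mul_le_mul_of_nonneg_left (prod_le_prod (fun i hi => (hrecip i (by simp at hi; omega)).le)
          fun i hi => htail i (by simp at hi; omega)) (by norm_num)
end

section
/- Let a ∈ ℂ with |a| < 1, let θ ∈ ℝ, and let h : ℂ → ℂ be given by h(z) = e^{iθ}(z − a)/(1 − (conj a) z). Let C ≥ 1 and suppose that for all z, w in the open unit disk {z ∈ ℂ : |z| < 1} one has |h′(z)| ≤ C |h′(w)|. Then |h(0)| ≤ (√C − 1)/(√C + 1). -/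
/-! `|h'(z)| = (1 - |a|²) / |1 - ā z|²` and `|h(0)| = |a|`. For `0 ≤ s < |a|` take `z` on the
diameter through `a` with `ā z = s`: comparing `h'` at `z` and `-z` gives `((1 + s)/(1 - s))² ≤ C`,
i.e. `s ≤ (√C - 1)/(√C + 1)`, and letting `s → |a|` gives the bound. -/

open Real

theorem le_sqrt_sub_one_div_sqrt_add_one {C s : ℝ} (hs : s < 1)
    (h : (1 + s) ^ 2 ≤ C * (1 - s) ^ 2) : s ≤ (√C - 1) / (√C + 1) := by
  have hC : 0 ≤ C := nonneg_of_mul_nonneg_left ((sq_nonneg _).trans h) (pow_pos (by linarith) 2)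
  have hroot : 1 + s ≤ √C * (1 - s) := by
    calc 1 + s ≤ |1 + s| := le_abs_self _
      _ ≤ √(C * (1 - s) ^ 2) := Real.abs_le_sqrt h
      _ = √C * (1 - s) := by rw [Real.sqrt_mul hC, Real.sqrt_sq (by linarith)]
  rw [le_div_iff₀ (by positivity)]
  linarith

theorem hasDerivAt_mul_sub_div_one_sub_mul {𝕜 : Type*} [NontriviallyNormedField 𝕜]
    (E a b z : 𝕜) (hz : 1 - b * z ≠ 0) :
    HasDerivAt (fun z => E * (z - a) / (1 - b * z)) (E * (1 - b * a) / (1 - b * z) ^ 2) z := by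
  have hnum : HasDerivAt (fun z : 𝕜 => E * (z - a)) E z := by
    simpa using ((hasDerivAt_id z).sub_const a).const_mul E
  have hden : HasDerivAt (fun z : 𝕜 => 1 - b * z) (-b) z := by
    simpa using ((hasDerivAt_id z).const_mul b).const_sub 1
  exact (hnum.fun_div hden hz).congr_deriv (by ring)

theorem one_sub_mul_ne_zero_of_norm_mul_lt_one {𝕜 : Type*} [NormedDivisionRing 𝕜] {b z : 𝕜}
    (h : ‖b‖ * ‖z‖ < 1) : 1 - b * z ≠ 0 := by
  rw [sub_ne_zero, ne_comm]
  intro hbz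
  simp [← norm_mul, hbz] at h

open ComplexConjugate

namespace Complex

noncomputable def blaschke (θ : ℝ) (a z : ℂ) : ℂ :=
  exp (I * θ) * (z - a) / (1 - conj a * z)

variable {θ : ℝ} {a : ℂ}

theorem norm_blaschke_zero : ‖blaschke θ a 0‖ = ‖a‖ := by
  simp [blaschke, norm_exp]

theorem norm_deriv_blaschke (ha : ‖a‖ < 1) {z : ℂ} (hz : ‖z‖ < 1) :
    ‖deriv (blaschke θ a) z‖ = (1 - ‖a‖ ^ 2) / ‖1 - conj a * z‖ ^ 2 := by
  have hden : 1 - conj a * z ≠ 0 := one_sub_mul_ne_zero_of_norm_mul_lt_one <| by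
    rw [norm_conj]
    nlinarith [norm_nonneg a, norm_nonneg z]
  have hderiv : HasDerivAt (blaschke θ a) _ z := hasDerivAt_mul_sub_div_one_sub_mul _ a _ z hden
  rw [hderiv.deriv, norm_div, norm_mul, mul_comm I, norm_exp_ofReal_mul_I, one_mul, norm_pow,
    conj_mul']
  norm_cast
  rw [Real.norm_of_nonneg (by nlinarith [norm_nonneg a])]

theorem one_add_sq_le_mul_one_sub_sq_of_distortion (ha : ‖a‖ < 1) {C s : ℝ} (hs₀ : 0 ≤ s)
    (hs : s < ‖a‖)
    (hdist : ∀ z w : ℂ, ‖z‖ < 1 → ‖w‖ < 1 →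
      ‖deriv (blaschke θ a) z‖ ≤ C * ‖deriv (blaschke θ a) w‖) :
    (1 + s) ^ 2 ≤ C * (1 - s) ^ 2 := by
  have ha₀ : 0 < ‖a‖ := hs₀.trans_lt hs
  set z : ℂ := ((s / ‖a‖ ^ 2 : ℝ) : ℂ) * a
  have hz : ‖z‖ < 1 := by
    rw [norm_mul, norm_real, Real.norm_of_nonneg (by positivity), sq, ← div_div,
      div_mul_cancel₀ _ ha₀.ne', div_lt_one ha₀]
    linarith
  have hconj : conj a * z = s := by
    rw [mul_left_comm, conj_mul']
    have : (‖a‖ : ℂ) ≠ 0 := by exact_mod_cast ha₀.ne'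
    push_cast
    field_simp
  have hmz : ‖-z‖ < 1 := by rwa [norm_neg]
  have hderiv_z : ‖deriv (blaschke θ a) z‖ = (1 - ‖a‖ ^ 2) / (1 - s) ^ 2 := by
    rw [norm_deriv_blaschke ha hz, hconj]
    norm_cast
    rw [Real.norm_eq_abs, sq_abs]
  have hderiv_mz : ‖deriv (blaschke θ a) (-z)‖ = (1 - ‖a‖ ^ 2) / (1 + s) ^ 2 := by
    rw [norm_deriv_blaschke ha hmz, mul_neg, hconj, sub_neg_eq_add]
    norm_cast
    rw [Real.norm_eq_abs, sq_abs]
  have key := hdist z (-z) hz hmz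
  rw [hderiv_z, hderiv_mz, mul_div_assoc', div_le_div_iff₀ (pow_pos (by linarith) 2)
    (by positivity)] at key
  have hpos : 0 < 1 - ‖a‖ ^ 2 := by nlinarith
  nlinarith

end Complex

/-- If a Möbius automorphism `h(z) = e^{iθ}(z - a)/(1 - ā z)` of the unit disk has
derivative distortion bounded by `C` on the disk, then
`|h(0)| ≤ (√C - 1)/(√C + 1)`. -/
theorem blaschke_distortion_center (a : ℂ) (ha : ‖a‖ < 1) (θ : ℝ)
    (h : ℂ → ℂ)
    (hdef : ∀ z : ℂ, h z =
      Complex.exp (Complex.I * (θ : ℂ)) * (z - a) / (1 - (starRingEnd ℂ) a * z))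
    (C : ℝ) (hC : 1 ≤ C)
    (hdist : ∀ z w : ℂ, ‖z‖ < 1 → ‖w‖ < 1 →
      ‖deriv h z‖ ≤ C * ‖deriv h w‖) :
    ‖h 0‖ ≤ (Real.sqrt C - 1) / (Real.sqrt C + 1) := by
  obtain rfl : h = Complex.blaschke θ a := funext hdef
  rw [Complex.norm_blaschke_zero]
  refine le_of_forall_lt_imp_le_of_dense fun s hs => ?_
  rcases le_or_gt s 0 with hs₀ | hs₀
  · have : 1 ≤ √C := Real.one_le_sqrt.mpr hC
    exact hs₀.trans (div_nonneg (by linarith) (by linarith))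
  · exact le_sqrt_sub_one_div_sqrt_add_one (hs.trans ha)
      (Complex.one_add_sq_le_mul_one_sub_sq_of_distortion ha hs₀.le hs hdist)
end

section
/- There exists a constant C > 0 such that for every real x with 0 < x ≤ 1/2 and every θ ∈ [−π/4, π/4], one has 1 + x · ∫_1^∞ 1/(e^{2π t x cos θ} − 1) dt ≤ C (1 − log x). -/
/-!
The integrand has the explicit primitive `log (1 - e^{-a t}) / a` (with `a = 2π x cos θ`), so
`∫_1^∞ = -log (1 - e^{-a}) / a`, and `1 - e^{-a} ≥ a / (1 + a)` bounds this by `log (1 + 1/a) / a`.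
Since `cos θ ≥ 1/2` we have `a ≥ x`, whence `x ∫_1^∞ ≤ log (1 + 1/x) ≤ 1 - log x`, and `C = 2` works.
-/

open Real MeasureTheory Set Filter Topology

lemma one_div_exp_sub_one_eq_exp_neg_div (u : ℝ) :
    1 / (exp u - 1) = exp (-u) / (1 - exp (-u)) := by
  rw [← one_div_div (1 - exp (-u)), sub_div, div_self (exp_ne_zero _), one_div (exp (-u)),
    ← exp_neg, neg_neg]

lemma hasDerivAt_log_one_sub_exp_neg_mul_div {a t : ℝ} (ha : 0 < a) (ht : 0 < t) :
    HasDerivAt (fun t => log (1 - exp (-(a * t))) / a) (1 / (exp (a * t) - 1)) t := by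
  have hpos : 0 < 1 - exp (-(a * t)) := sub_pos.mpr (exp_lt_one_iff.mpr (by nlinarith))
  have hexp : HasDerivAt (fun t => 1 - exp (-(a * t))) (exp (-(a * t)) * a) t := by
    simpa using ((((hasDerivAt_id t).const_mul a).neg).exp).const_sub 1
  refine ((hexp.log hpos.ne').div_const a).congr_deriv ?_
  rw [one_div_exp_sub_one_eq_exp_neg_div]
  field_simp

lemma integral_Ioi_one_div_exp_mul_sub_one {a b : ℝ} (ha : 0 < a) (hb : 0 < b) :
    ∫ t in Ioi b, 1 / (exp (a * t) - 1) = -log (1 - exp (-(a * b))) / a := by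
  have hlim : Tendsto (fun t => log (1 - exp (-(a * t))) / a) atTop (𝓝 0) := by
    have hexp : Tendsto (fun t => exp (-(a * t))) atTop (𝓝 0) :=
      tendsto_exp_atBot.comp (tendsto_neg_atTop_atBot.comp (tendsto_id.const_mul_atTop ha))
    simpa using ((hexp.const_sub 1).log (by norm_num)).div_const a
  rw [integral_Ioi_of_hasDerivAt_of_nonneg'
    (fun t ht => hasDerivAt_log_one_sub_exp_neg_mul_div ha (hb.trans_le ht))
    (fun t ht => ?_) hlim]
  · ring
  · have : 1 < exp (a * t) := one_lt_exp_iff.mpr (mul_pos ha (hb.trans ht))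
    exact div_nonneg zero_le_one (by linarith)

lemma neg_log_one_sub_exp_neg_le {c : ℝ} (hc : 0 < c) : -log (1 - exp (-c)) ≤ log (1 + c⁻¹) := by
  have hle : c / (1 + c) ≤ 1 - exp (-c) := by
    have : exp (-c) ≤ 1 / (1 + c) := by
      rw [exp_neg, ← one_div]
      exact one_div_le_one_div_of_le (by positivity) (by linarith [add_one_le_exp c])
    calc c / (1 + c) = 1 - 1 / (1 + c) := by field_simp; ring
      _ ≤ 1 - exp (-c) := by linarith
  calc -log (1 - exp (-c)) ≤ -log (c / (1 + c)) := by gcongr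
    _ = log (1 + c⁻¹) := by
        rw [← log_inv, inv_div]; congr 1; field_simp; ring

lemma mul_integral_Ioi_one_one_div_exp_mul_sub_one_le {x a : ℝ} (hx : 0 < x) (hx1 : x ≤ 1)
    (hxa : x ≤ a) : x * ∫ t in Ioi 1, 1 / (exp (a * t) - 1) ≤ 1 - log x := by
  have ha : 0 < a := hx.trans_le hxa
  rw [integral_Ioi_one_div_exp_mul_sub_one ha one_pos, mul_one]
  have hN : 0 ≤ -log (1 - exp (-a)) :=
    neg_nonneg.mpr (log_nonpos (sub_nonneg.mpr (exp_le_one_iff.mpr (by linarith)))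
      (by linarith [exp_pos (-a)]))
  have hlog : log (1 + a⁻¹) ≤ 1 - log x :=
    calc log (1 + a⁻¹) ≤ log (1 + x⁻¹) := by gcongr
      _ = log (x + 1) - log x := by
        rw [← log_div (by positivity) hx.ne']; congr 1; field_simp
      _ ≤ 1 - log x := by linarith [log_le_sub_one_of_pos (by positivity : 0 < x + 1)]
  calc x * (-log (1 - exp (-a)) / a) = x / a * -log (1 - exp (-a)) := by ring
    _ ≤ 1 * -log (1 - exp (-a)) := by gcongr; exact (div_le_one ha).mpr hxa
    _ ≤ 1 - log x := by linarith [neg_log_one_sub_exp_neg_le ha]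

lemma half_le_cos_of_abs_le_pi_div_four {θ : ℝ} (hθ : |θ| ≤ π / 4) : 1 / 2 ≤ cos θ := by
  have hθ1 : |θ| ≤ 1 := hθ.trans (by linarith [pi_le_four])
  have : θ ^ 2 ≤ 1 := by nlinarith [sq_abs θ, abs_nonneg θ]
  linarith [one_sub_sq_div_two_le_cos (x := θ)]

/-- There is a constant `C > 0` such that for `0 < x ≤ 1/2` and `|θ| ≤ π/4`,
`1 + x ∫_1^∞ dt/(e^{2πtx cos θ} - 1) ≤ C (1 - log x)`. -/
theorem integral_log_estimate :
    ∃ C : ℝ, 0 < C ∧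
      ∀ x θ : ℝ, 0 < x → x ≤ 1 / 2 → |θ| ≤ π / 4 →
        1 + x * ∫ t in Set.Ioi (1 : ℝ), 1 / (Real.exp (2 * π * t * x * Real.cos θ) - 1) ≤
          C * (1 - Real.log x) := by
  refine ⟨2, two_pos, fun x θ hx hx2 hθ => ?_⟩
  have hcos := half_le_cos_of_abs_le_pi_div_four hθ
  have hxa : x ≤ 2 * π * x * cos θ := by
    nlinarith [mul_le_mul_of_nonneg_left hcos (by positivity : 0 ≤ 2 * π * x), pi_gt_three]
  have hbound := mul_integral_Ioi_one_one_div_exp_mul_sub_one_le hx (by linarith) hxa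
  simp_rw [show ∀ t, 2 * π * t * x * cos θ = 2 * π * x * cos θ * t from fun t => by ring]
  linarith [log_nonpos hx.le (by linarith)]
end

section
/- For every r ∈ (0, 1/2) there exists an integer N ≥ 2 with the following property. Let ⟨m_i : b_{i,j} : ε_{i,j}⟩ be a sequence with integers m_i ≥ 1, integers b_{i,j} ≥ 2 and signs ε_{i,j} ∈ {+1, −1} (for i ≥ 1, 1 ≤ j ≤ m_i) belonging to the class QG_N, let p_i/q_i = [⟨b_{i,j} : ε_{i,j}⟩_{j=1}^{m_i}] with q_i > 0 the denominator produced by the recursion, and set k₁ = 1 and k_i = ∏_{l=1}^{i−1} q_l for i ≥ 2. Then for every i ≥ 1 and every z ∈ ℂ with |z − (p_i/q_i − 𝑖 · (k_i/q_i) · (log 2)/(2π))| ≤ ((log 2)/(2π)) · (k_i/q_i) (where 𝑖 is the imaginary unit): (a) for every integer n with 0 ≤ n ≤ m_i − 2, the iterate G^n(z) is defined (the orbit does not pass through 0) and satisfies |G^n(z)| ≤ r and |Im G^n(z)| ≤ |Re G^n(z)|; and (b) the iterate G^{m_i−1}(z) is defined and satisfies |G^{m_i−1}(z)| ≤ r.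 -/
open Real

/-- The integer closest to `x`, with the convention `x ∈ ([x]-1/2, [x]+1/2]` for
`x > 0` and `x ∈ [[x]-1/2, [x]+1/2)` for `x < 0` (and `[0] = 0`). -/
noncomputable def nearestInt (x : ℝ) : ℤ :=
  if 0 < x then ⌈x - 1 / 2⌉ else ⌊x + 1 / 2⌋

/-- The complex modified Gauss map `G(z) = -1/z - [Re(-1/z)]`. -/
noncomputable def mGaussC (z : ℂ) : ℂ :=
  -1 / z - (nearestInt (-1 / z).re : ℂ)

/-- The denominators of the convergents of a signed continued fraction with
entries `b` and signs `ε` (0-based): `scfDen (l+1)` is the paper's `q_l`, with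
`q_{-1} = 0`, `q₀ = 1`, `q_{l+1} = b_{l+1} q_l + ε_{l+1} q_{l-1}`. -/
def scfDen (b ε : ℕ → ℤ) : ℕ → ℤ
  | 0 => 0
  | 1 => 1
  | l + 2 => b l * scfDen b ε (l + 1) + ε l * scfDen b ε l

/-!
Fix a block `c = b i`, `d = ε i` of length `L`; let `v n` be its tail `[⟨c j : d j⟩_{j ≥ n}]`
and `Q n` the denominator of that tail, so that `|v n| = Q (n + 1) / Q n` and
`-1 / v n = ± (c n + v (n + 1))`.

The disk of the statement is a horodisk: it lies below the real axis and touches it at `v 0`.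
The inversion `w ↦ -1/w` maps the horodisk of radius `y` at `x` onto the horodisk of radius
`y / x²` at `-1/x`; when that radius and `|v (n + 1)|` are small, the nearest integer to
`Re (-1/w)` is `± c n`. Hence, by induction, `G^n z` lies in the horodisk at `± v n` of radius
`y n = κ Q 0 / Q n ^ 2`, where `κ = k_i log 2 / (2π)`. The growth `c (j + 1) ≥ c j ^ 2` gives
`c 0 Q 0 ≤ 2 Q n ^ 2`, and `b_{i+1,0} ≥ q_i²` gives `c 0 ≥ N k_i`; so `y n ≤ 2κ / c 0` is small,
and `3 y n ≤ |v n|` puts the horodisk inside the cone `|Im| ≤ |Re|`.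
-/

lemma scfDen_add_two (c d : ℕ → ℤ) (L : ℕ) :
    scfDen c d (L + 2) =
      c 0 * scfDen (fun j => c (j + 1)) (fun j => d (j + 1)) (L + 1) +
        d 1 * scfDen (fun j => c (j + 2)) (fun j => d (j + 2)) L := by
  induction L using Nat.strong_induction_on with
  | _ L ih =>
    match L with
    | 0 => simp [scfDen]
    | 1 => simp only [scfDen]; ring
    | L + 2 =>
      rw [scfDen, ih (L + 1) (by omega), ih L (by omega)]
      simp only [scfDen]
      ring

/-- `tailDen c d L n` is the denominator `Q n` of the tail `[⟨c j : d j⟩_{j=n}^{L-1}]`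
(equal to `1` once `L ≤ n`). -/
def tailDen (c d : ℕ → ℤ) (L n : ℕ) : ℤ :=
  scfDen (fun j => c (n + j)) (fun j => d (n + j)) (L - n + 1)

section Continuant

variable {c d : ℕ → ℤ} {L n : ℕ}

lemma tailDen_zero (c d : ℕ → ℤ) (L : ℕ) : tailDen c d L 0 = scfDen c d (L + 1) := by
  simp [tailDen]

lemma tailDen_of_le (h : L ≤ n) : tailDen c d L n = 1 := by
  simp [tailDen, Nat.sub_eq_zero_of_le h, scfDen]

lemma tailDen_of_succ_eq (h : n + 1 = L) : tailDen c d L n = c n := by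
  simp [tailDen, show L - n = 1 by omega, scfDen]

lemma tailDen_eq_add (h : n + 2 ≤ L) :
    tailDen c d L n = c n * tailDen c d L (n + 1) + d (n + 1) * tailDen c d L (n + 2) := by
  rw [tailDen, show L - n + 1 = L - (n + 2) + 1 + 2 by omega, scfDen_add_two]
  simp only [tailDen, show L - (n + 1) = L - (n + 2) + 1 by omega, add_zero]
  congr 3 <;> funext j <;> congr 1 <;> omega

lemma head_le_of_sq_le (h2 : ∀ j < L, 2 ≤ c j)
    (hsq : ∀ j, j + 1 < L → c j ^ 2 ≤ c (j + 1)) (hn : n < L) : c 0 ≤ c n := by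
  induction n with
  | zero => rfl
  | succ n ih => nlinarith [ih (by omega), h2 n (by omega), hsq n hn]

variable (h2 : ∀ j < L, 2 ≤ c j) (hs : ∀ j < L, d j = 1 ∨ d j = -1)
include h2 hs

lemma one_le_tailDen_succ_and_lt (hn : n < L) :
    1 ≤ tailDen c d L (n + 1) ∧ tailDen c d L (n + 1) < tailDen c d L n := by
  obtain ⟨t, ht⟩ : ∃ t, L = n + 1 + t := ⟨L - (n + 1), by omega⟩
  induction t generalizing n with
  | zero =>
    rw [tailDen_of_le (by omega), tailDen_of_succ_eq (by omega)]
    have := h2 n hn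
    omega
  | succ t ih =>
    obtain ⟨h1, hlt⟩ := ih (n := n + 1) (by omega) (by omega)
    refine ⟨by omega, ?_⟩
    rw [tailDen_eq_add (n := n) (by omega)]
    have := h2 n hn
    rcases hs (n + 1) (by omega) with hd | hd <;> rw [hd] <;> nlinarith

lemma one_le_tailDen (n : ℕ) : 1 ≤ tailDen c d L n := by
  rcases lt_or_ge n L with hn | hn
  · have := one_le_tailDen_succ_and_lt h2 hs hn
    omega
  · rw [tailDen_of_le hn]

lemma tailDen_pos (n : ℕ) : 0 < tailDen c d L n :=
  Int.one_pos.trans_le (one_le_tailDen h2 hs n)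

lemma tailDen_succ_le (n : ℕ) : tailDen c d L (n + 1) ≤ tailDen c d L n := by
  rcases lt_or_ge n L with hn | hn
  · exact (one_le_tailDen_succ_and_lt h2 hs hn).2.le
  · rw [tailDen_of_le hn, tailDen_of_le (by omega)]

lemma tailDen_bounds (hn : n < L) :
    (c n - 1) * tailDen c d L (n + 1) < tailDen c d L n ∧
      tailDen c d L n ≤ (c n + 1) * tailDen c d L (n + 1) := by
  rcases Nat.lt_or_ge (n + 1) L with h | h
  · obtain ⟨h1, hlt⟩ := one_le_tailDen_succ_and_lt h2 hs h
    rw [tailDen_eq_add h]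
    rcases hs (n + 1) h with hd | hd <;> rw [hd] <;> constructor <;> nlinarith
  · rw [tailDen_of_succ_eq (n := n) (by omega), tailDen_of_le h]
    omega

lemma le_tailDen (hn : n < L) : c n ≤ tailDen c d L n := by
  have := (tailDen_bounds h2 hs hn).1
  nlinarith [one_le_tailDen h2 hs (n + 1), h2 n hn]

lemma head_mul_tailDen_zero_le (hsq : ∀ j, j + 1 < L → c j ^ 2 ≤ c (j + 1)) (hn : n < L) :
    c 0 * tailDen c d L 0 ≤ 2 * (c n - 1) * tailDen c d L n := by
  induction n with
  | zero => nlinarith [h2 0 hn, one_le_tailDen h2 hs 0]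
  | succ n ih =>
    have hup := (tailDen_bounds h2 hs (n := n) (by omega)).2
    nlinarith [ih (by omega), h2 n (by omega), hsq n hn, one_le_tailDen h2 hs (n + 1)]

lemma head_mul_tailDen_zero_le_two_mul_sq (hsq : ∀ j, j + 1 < L → c j ^ 2 ≤ c (j + 1))
    (hn : n < L) : c 0 * tailDen c d L 0 ≤ 2 * tailDen c d L n ^ 2 := by
  nlinarith [head_mul_tailDen_zero_le h2 hs hsq hn, le_tailDen h2 hs hn, tailDen_pos h2 hs n]

end Continuant

section TailValue

variable {c d : ℕ → ℤ} {L n : ℕ}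

lemma scf_tail_succ (hn : n < L) :
    scf c d n (L - n) = d n / (c n + scf c d (n + 1) (L - (n + 1))) := by
  rw [show L - n = L - (n + 1) + 1 by omega, scf]

lemma exists_neg_one_div_eq_intCast_add (hs : ∀ j < L, d j = 1 ∨ d j = -1) (hn : n < L)
    {x : ℝ} (hx : |x| = |scf c d n (L - n)|) :
    ∃ (A : ℤ) (x' : ℝ), |x'| = |scf c d (n + 1) (L - (n + 1))| ∧ -1 / x = A + x' := by
  rw [scf_tail_succ hn] at hx
  set u := scf c d (n + 1) (L - (n + 1))
  -- `x = ± d n / (c n + u)` with `d n = ± 1`, so `-1 / x = τ (c n + u)` for a sign `τ`.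
  have key : ∀ τ : ℤ, (τ = 1 ∨ τ = -1) → -1 / x = τ * (c n + u) →
      ∃ (A : ℤ) (x' : ℝ), |x'| = |u| ∧ -1 / x = A + x' := fun τ hτ h =>
    ⟨τ * c n, τ * u, by rcases hτ with rfl | rfl <;> simp, by rw [h]; push_cast; ring⟩
  rcases abs_eq_abs.mp hx with rfl | rfl <;> rcases hs n hn with hd | hd
  · exact key (-1) (Or.inr rfl) (by simp [hd])
  · exact key 1 (Or.inl rfl) (by simp [hd])
  · exact key 1 (Or.inl rfl) (by simp [hd])
  · exact key (-1) (Or.inr rfl) (by simp [hd]; ring)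

variable (h2 : ∀ j < L, 2 ≤ c j) (hs : ∀ j < L, d j = 1 ∨ d j = -1)
include h2 hs

lemma scf_tail_eq (hn : n < L) :
    scf c d n (L - n) = d n * tailDen c d L (n + 1) / tailDen c d L n := by
  obtain ⟨t, ht⟩ : ∃ t, L = n + 1 + t := ⟨L - (n + 1), by omega⟩
  induction t generalizing n with
  | zero =>
    rw [scf_tail_succ hn, show L - (n + 1) = 0 by omega, scf, tailDen_of_le (n := n + 1) (by omega),
      tailDen_of_succ_eq (by omega)]
    simp
  | succ t ih =>
    have hQ1 : (tailDen c d L (n + 1) : ℝ) ≠ 0 := by exact_mod_cast (tailDen_pos h2 hs _).ne'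
    have hQ : (tailDen c d L n : ℝ) ≠ 0 := by exact_mod_cast (tailDen_pos h2 hs n).ne'
    have hrec : (tailDen c d L n : ℝ) =
        c n * tailDen c d L (n + 1) + d (n + 1) * tailDen c d L (n + 2) := by
      exact_mod_cast tailDen_eq_add (n := n) (by omega)
    rw [scf_tail_succ hn, ih (by omega) (by omega)]
    rw [hrec] at hQ ⊢
    field_simp

lemma abs_scf_tail (hn : n < L) :
    |scf c d n (L - n)| = tailDen c d L (n + 1) / tailDen c d L n := by
  have hd : |(d n : ℝ)| = 1 := by rcases hs n hn with h | h <;> simp [h]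
  have hQ1 : (0 : ℝ) < tailDen c d L (n + 1) := by exact_mod_cast tailDen_pos h2 hs (n + 1)
  have hQ : (0 : ℝ) < tailDen c d L n := by exact_mod_cast tailDen_pos h2 hs n
  rw [scf_tail_eq h2 hs hn, abs_div, abs_mul, hd, one_mul, abs_of_pos hQ1, abs_of_pos hQ]

lemma scf_tail_ne_zero (hn : n < L) : scf c d n (L - n) ≠ 0 := by
  have hQ1 : (0 : ℝ) < tailDen c d L (n + 1) := by exact_mod_cast tailDen_pos h2 hs (n + 1)
  have hQ : (0 : ℝ) < tailDen c d L n := by exact_mod_cast tailDen_pos h2 hs n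
  rw [← abs_pos, abs_scf_tail h2 hs hn]
  positivity

lemma abs_scf_tail_le (hn : n < L) : |scf c d n (L - n)| ≤ 1 / (c n - 1) := by
  have hlt : ((c n : ℝ) - 1) * tailDen c d L (n + 1) < tailDen c d L n := by
    exact_mod_cast (tailDen_bounds h2 hs hn).1
  have hc : (2 : ℝ) ≤ c n := by exact_mod_cast h2 n hn
  have hQ1 : (0 : ℝ) < tailDen c d L (n + 1) := by exact_mod_cast tailDen_pos h2 hs (n + 1)
  have hQ : (0 : ℝ) < tailDen c d L n := by exact_mod_cast tailDen_pos h2 hs n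
  rw [abs_scf_tail h2 hs hn, div_le_div_iff₀ hQ (by linarith)]
  linarith

end TailValue

lemma nearestInt_eq_of_abs_sub_lt {t : ℝ} {A : ℤ} (h : |t - A| < 1 / 2) : nearestInt t = A := by
  rw [abs_lt] at h
  unfold nearestInt
  split_ifs
  · rw [Int.ceil_eq_iff]
    constructor <;> linarith
  · rw [Int.floor_eq_iff]
    constructor <;> linarith

def horodisk (x y : ℝ) : Set ℂ :=
  Metric.closedBall ((x : ℂ) - Complex.I * y) y

section Horodisk

variable {w : ℂ} {x y : ℝ}

lemma mem_horodisk_iff (hy : 0 ≤ y) :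
    w ∈ horodisk x y ↔ Complex.normSq (w - x) ≤ -2 * y * w.im := by
  rw [horodisk, mem_closedBall_iff_norm, ← sq_le_sq₀ (norm_nonneg _) hy, Complex.sq_norm]
  simp only [Complex.normSq_apply, Complex.sub_re, Complex.sub_im, Complex.ofReal_re,
    Complex.ofReal_im, Complex.mul_re, Complex.mul_im, Complex.I_re, Complex.I_im]
  constructor <;> intro h <;> nlinarith

lemma abs_re_sub_le_of_mem_horodisk (hw : w ∈ horodisk x y) : |w.re - x| ≤ y := by
  rw [horodisk, mem_closedBall_iff_norm] at hw
  simpa using (Complex.abs_re_le_norm _).trans hw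

lemma abs_im_add_le_of_mem_horodisk (hw : w ∈ horodisk x y) : |w.im + y| ≤ y := by
  rw [horodisk, mem_closedBall_iff_norm] at hw
  simpa using (Complex.abs_im_le_norm _).trans hw

lemma ne_zero_of_mem_horodisk (hx : x ≠ 0) (hw : w ∈ horodisk x y) : w ≠ 0 := by
  rintro rfl
  have := abs_re_sub_le_of_mem_horodisk hw
  have hy : 0 ≤ y := (abs_nonneg _).trans this
  rw [mem_horodisk_iff hy] at hw
  simp only [zero_sub, Complex.normSq_neg, Complex.normSq_ofReal, Complex.zero_im, mul_zero] at hw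
  exact hx (mul_self_eq_zero.mp (le_antisymm hw (mul_self_nonneg x)))

lemma norm_le_of_mem_horodisk (hw : w ∈ horodisk x y) : ‖w‖ ≤ |x| + 2 * y := by
  have hy : 0 ≤ y := (abs_nonneg _).trans (abs_re_sub_le_of_mem_horodisk hw)
  have hc : ‖(x : ℂ) - Complex.I * y‖ ≤ |x| + y := by
    refine (norm_sub_le _ _).trans ?_
    simp [abs_of_nonneg hy]
  linarith [norm_le_of_mem_closedBall hw]

lemma abs_im_le_abs_re_of_mem_horodisk (h : 3 * y ≤ |x|) (hw : w ∈ horodisk x y) :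
    |w.im| ≤ |w.re| := by
  have hre := abs_re_sub_le_of_mem_horodisk hw
  have him := abs_im_add_le_of_mem_horodisk hw
  have := abs_sub_abs_le_abs_sub x w.re
  rw [abs_sub_comm] at this
  rw [abs_le] at him ⊢
  constructor <;> linarith [abs_nonneg w.re, le_abs_self w.re]

/-- Both membership conditions reduce to `normSq (w - x) ≤ -2 * y * w.im`, since
`-1/w + 1/x = (w - x) / (w x)` and `Im (-1/w) = Im w / normSq w`. -/
lemma neg_one_div_mem_horodisk (hx : x ≠ 0) (hy : 0 ≤ y) (hw : w ∈ horodisk x y) :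
    -1 / w ∈ horodisk (-1 / x) (y / x ^ 2) := by
  have hw0 : w ≠ 0 := ne_zero_of_mem_horodisk hx hw
  rw [mem_horodisk_iff hy] at hw
  rw [mem_horodisk_iff (by positivity)]
  have hxC : (x : ℂ) ≠ 0 := by exact_mod_cast hx
  have hdiff : -1 / w - ((-1 / x : ℝ) : ℂ) = (w - x) / (w * x) := by
    push_cast
    field_simp
    ring
  have him : (-1 / w).im = w.im / Complex.normSq w := by simp [neg_div]
  have hn : 0 < Complex.normSq w := Complex.normSq_pos.mpr hw0
  rw [hdiff, him, Complex.normSq_div, Complex.normSq_mul, Complex.normSq_ofReal]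
  calc Complex.normSq (w - x) / (Complex.normSq w * (x * x))
      ≤ -2 * y * w.im / (Complex.normSq w * (x * x)) :=
        div_le_div_of_nonneg_right hw (mul_nonneg hn.le (mul_self_nonneg x))
    _ = -2 * (y / x ^ 2) * (w.im / Complex.normSq w) := by field_simp

lemma mGaussC_mem_horodisk (hx : x ≠ 0) (hy : 0 ≤ y) (hw : w ∈ horodisk x y)
    {A : ℤ} {x' : ℝ} (hA : -1 / x = A + x') (hsmall : |x'| + y / x ^ 2 < 1 / 2) :
    mGaussC w ∈ horodisk x' (y / x ^ 2) := by
  have hu := neg_one_div_mem_horodisk hx hy hw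
  rw [hA] at hu
  have hre := abs_re_sub_le_of_mem_horodisk hu
  have hnear : nearestInt (-1 / w).re = A := by
    apply nearestInt_eq_of_abs_sub_lt
    calc |(-1 / w).re - A| = |((-1 / w).re - (A + x')) + x'| := by ring_nf
      _ ≤ |(-1 / w).re - (A + x')| + |x'| := abs_add_le _ _
      _ < 1 / 2 := by linarith
  rw [horodisk, mem_closedBall_iff_norm] at hu ⊢
  rw [mGaussC, hnear]
  convert hu using 2
  push_cast
  ring

end Horodisk

/-- The radius of the horodisk containing the `n`-th iterate: `y (n + 1) = y n / v n ^ 2` by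
`neg_one_div_mem_horodisk`, and `|v n| = Q (n + 1) / Q n`. -/
noncomputable def orbitRadius (c d : ℕ → ℤ) (L : ℕ) (κ : ℝ) (n : ℕ) : ℝ :=
  κ * tailDen c d L 0 / (tailDen c d L n : ℝ) ^ 2

section Orbit

variable {c d : ℕ → ℤ} {L n : ℕ} {κ : ℝ}
variable (h2 : ∀ j < L, 2 ≤ c j) (hs : ∀ j < L, d j = 1 ∨ d j = -1)
include h2 hs

lemma orbitRadius_pos (hκ : 0 < κ) : 0 < orbitRadius c d L κ n := by
  have := tailDen_pos h2 hs 0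
  have := tailDen_pos h2 hs n
  unfold orbitRadius
  positivity

lemma orbitRadius_succ (hn : n < L) :
    orbitRadius c d L κ (n + 1) = orbitRadius c d L κ n / scf c d n (L - n) ^ 2 := by
  have hQ1 : (tailDen c d L (n + 1) : ℝ) ≠ 0 := by exact_mod_cast (tailDen_pos h2 hs _).ne'
  have hQ : (tailDen c d L n : ℝ) ≠ 0 := by exact_mod_cast (tailDen_pos h2 hs n).ne'
  rw [← sq_abs, abs_scf_tail h2 hs hn, orbitRadius, orbitRadius]
  field_simp

variable (hsq : ∀ j, j + 1 < L → c j ^ 2 ≤ c (j + 1))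
include hsq

lemma orbitRadius_le (hκ : 0 ≤ κ) (hn : n < L) : orbitRadius c d L κ n ≤ 2 * κ / c 0 := by
  have hg : (c 0 : ℝ) * tailDen c d L 0 ≤ 2 * (tailDen c d L n : ℝ) ^ 2 := by
    exact_mod_cast head_mul_tailDen_zero_le_two_mul_sq h2 hs hsq hn
  have hQ : (0 : ℝ) < tailDen c d L n := by exact_mod_cast tailDen_pos h2 hs n
  have hc : (2 : ℝ) ≤ c 0 := by exact_mod_cast h2 0 (by omega)
  rw [orbitRadius, div_le_div_iff₀ (by positivity) (by linarith)]
  nlinarith [mul_le_mul_of_nonneg_left hg hκ]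

lemma three_mul_orbitRadius_le (h6 : 6 * κ ≤ c 0) (hn : n + 2 ≤ L) :
    3 * orbitRadius c d L κ n ≤ |scf c d n (L - n)| := by
  have hg : (c 0 : ℝ) * tailDen c d L 0 ≤ 2 * (tailDen c d L (n + 1) : ℝ) ^ 2 := by
    exact_mod_cast head_mul_tailDen_zero_le_two_mul_sq h2 hs hsq (n := n + 1) (by omega)
  have hle : (tailDen c d L (n + 1) : ℝ) ≤ tailDen c d L n := by
    exact_mod_cast tailDen_succ_le h2 hs n
  have hQ0 : (0 : ℝ) < tailDen c d L 0 := by exact_mod_cast tailDen_pos h2 hs 0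
  have hQ1 : (0 : ℝ) < tailDen c d L (n + 1) := by exact_mod_cast tailDen_pos h2 hs (n + 1)
  have hQ : (0 : ℝ) < tailDen c d L n := by exact_mod_cast tailDen_pos h2 hs n
  have key : 3 * κ * tailDen c d L 0 ≤ (tailDen c d L (n + 1) : ℝ) * tailDen c d L n := by
    nlinarith [mul_le_mul_of_nonneg_right h6 hQ0.le, mul_le_mul_of_nonneg_left hle hQ1.le]
  rw [abs_scf_tail h2 hs (by omega), orbitRadius, mul_div_assoc',
    div_le_div_iff₀ (by positivity) hQ]
  nlinarith [mul_le_mul_of_nonneg_right key hQ.le]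

theorem exists_mem_horodisk_iterate_mGaussC (hκ : 0 < κ) (h4 : 4 ≤ c 0) (h24 : 24 * κ ≤ c 0)
    {z : ℂ} (hz : z ∈ horodisk (scf c d 0 L) (κ / tailDen c d L 0)) (hn : n < L) :
    ∃ x, |x| = |scf c d n (L - n)| ∧ mGaussC^[n] z ∈ horodisk x (orbitRadius c d L κ n) := by
  induction n with
  | zero =>
    have hQ : (tailDen c d L 0 : ℝ) ≠ 0 := by exact_mod_cast (tailDen_pos h2 hs 0).ne'
    have hr : orbitRadius c d L κ 0 = κ / tailDen c d L 0 := by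
      unfold orbitRadius
      field_simp
    exact ⟨scf c d 0 L, rfl, by rwa [hr]⟩
  | succ n ih =>
    obtain ⟨x, hx, hw⟩ := ih (by omega)
    obtain ⟨A, x', hx', hA⟩ := exists_neg_one_div_eq_intCast_add hs (by omega) hx
    have hx0 : x ≠ 0 := by
      rw [← abs_ne_zero, hx, abs_ne_zero]
      exact scf_tail_ne_zero h2 hs (by omega)
    have hy : orbitRadius c d L κ n / x ^ 2 = orbitRadius c d L κ (n + 1) := by
      rw [← sq_abs, hx, sq_abs, orbitRadius_succ h2 hs (by omega)]
    have hc : (4 : ℝ) ≤ c (n + 1) := by exact_mod_cast h4.trans (head_le_of_sq_le h2 hsq hn)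
    have hv : |x'| ≤ 1 / 3 := by
      rw [hx']
      refine (abs_scf_tail_le h2 hs hn).trans ?_
      rw [div_le_div_iff₀ (by linarith) (by norm_num)]
      linarith
    have hyle : orbitRadius c d L κ (n + 1) ≤ 1 / 12 := by
      refine (orbitRadius_le h2 hs hsq hκ.le hn).trans ?_
      rw [div_le_div_iff₀ (by linarith) (by norm_num)]
      linarith
    refine ⟨x', hx', ?_⟩
    rw [Function.iterate_succ_apply', ← hy]
    exact mGaussC_mem_horodisk hx0 (orbitRadius_pos h2 hs hκ).le hw hA (by rw [hy]; linarith)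

theorem iterate_mGaussC_bounds (hκ : 0 < κ) (h4 : 4 ≤ c 0) (h24 : 24 * κ ≤ c 0)
    {z : ℂ} (hz : z ∈ horodisk (scf c d 0 L) (κ / tailDen c d L 0)) :
    (∀ n, n + 2 ≤ L → |(mGaussC^[n] z).im| ≤ |(mGaussC^[n] z).re|) ∧
      ∀ n < L, mGaussC^[n] z ≠ 0 ∧ ‖mGaussC^[n] z‖ ≤ 1 / (c 0 - 1) + 4 * κ / c 0 := by
  refine ⟨fun n hn => ?_, fun n hn => ?_⟩
  · obtain ⟨x, hx, hw⟩ := exists_mem_horodisk_iterate_mGaussC h2 hs hsq hκ h4 h24 hz (n := n)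
      (by omega)
    refine abs_im_le_abs_re_of_mem_horodisk ?_ hw
    rw [hx]
    exact three_mul_orbitRadius_le h2 hs hsq (by linarith) hn
  · obtain ⟨x, hx, hw⟩ := exists_mem_horodisk_iterate_mGaussC h2 hs hsq hκ h4 h24 hz hn
    refine ⟨ne_zero_of_mem_horodisk ?_ hw, (norm_le_of_mem_horodisk hw).trans ?_⟩
    · rw [← abs_ne_zero, hx, abs_ne_zero]
      exact scf_tail_ne_zero h2 hs hn
    have hc : (c 0 : ℝ) ≤ c n := by exact_mod_cast head_le_of_sq_le h2 hsq hn
    have hc4 : (4 : ℝ) ≤ c 0 := by exact_mod_cast h4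
    have hv : |x| ≤ 1 / (c 0 - 1) := by
      rw [hx]
      refine (abs_scf_tail_le h2 hs hn).trans ?_
      gcongr
      linarith
    have hy := orbitRadius_le h2 hs hsq hκ.le hn
    linarith [show 2 * (2 * κ / c 0) = 4 * κ / c 0 by ring]

theorem iterate_mGaussC_bounds_of_le {r K C : ℝ} (hr : 0 < r) (hK : 1 ≤ K) (hC0 : 0 < C)
    (hC : C ≤ 1 / 8) (hc : (2 / r + 4) * K ≤ c 0) {z : ℂ}
    (hz : z ∈ horodisk (scf c d 0 L) (C * K / tailDen c d L 0)) :
    (∀ n, n + 2 ≤ L → |(mGaussC^[n] z).im| ≤ |(mGaussC^[n] z).re|) ∧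
      ∀ n < L, mGaussC^[n] z ≠ 0 ∧ ‖mGaussC^[n] z‖ ≤ r := by
  have hr2 : 2 / r * r = 2 := div_mul_cancel₀ _ hr.ne'
  have hrK : 0 ≤ 2 / r * K := by positivity
  have hc4 : 4 * K ≤ (c 0 : ℝ) := by linarith
  obtain ⟨hcone, hbound⟩ := iterate_mGaussC_bounds h2 hs hsq (κ := C * K) (by positivity)
    (by exact_mod_cast (show (4 : ℝ) ≤ c 0 by linarith)) (by nlinarith) hz
  refine ⟨hcone, fun n hn => ⟨(hbound n hn).1, (hbound n hn).2.trans ?_⟩⟩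
  have hv : 1 / ((c 0 : ℝ) - 1) ≤ r / 2 := by
    rw [div_le_div_iff₀ (by linarith) two_pos]
    nlinarith
  have hy : 4 * (C * K) / c 0 ≤ r / 2 := by
    rw [div_le_div_iff₀ (by linarith) two_pos]
    nlinarith [mul_le_mul_of_nonneg_left hc hr.le]
  linarith

end Orbit

lemma natCast_mul_prod_scfDen_le {N : ℕ} {m : ℕ → ℕ} {b ε : ℕ → ℕ → ℤ}
    (hm : ∀ i, 1 ≤ m i) (hb2 : ∀ i, ∀ j < m i, 2 ≤ b i j)
    (hε : ∀ i, ∀ j < m i, ε i j = 1 ∨ ε i j = -1)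
    (hb00 : (N : ℤ) ≤ b 0 0) (hq : ∀ i, scfDen (b i) (ε i) (m i + 1) ^ 2 ≤ b (i + 1) 0)
    (i : ℕ) : N * ∏ l ∈ Finset.range i, scfDen (b l) (ε l) (m l + 1) ≤ b i 0 := by
  induction i with
  | zero => simpa using hb00
  | succ i ih =>
    have hQ := le_tailDen (hb2 i) (hε i) (hm i)
    have hQ0 := tailDen_pos (hb2 i) (hε i) 0
    rw [tailDen_zero] at hQ hQ0
    rw [Finset.prod_range_succ, ← mul_assoc]
    nlinarith [hq i, mul_le_mul_of_nonneg_right ih hQ0.le]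

lemma log_two_div_two_pi_le : Real.log 2 / (2 * π) ≤ 1 / 8 := by
  rw [div_le_div_iff₀ (by positivity) (by norm_num)]
  nlinarith [Real.log_two_lt_d9, Real.pi_gt_three]

theorem rationals_with_quadratic_growth_general (r : ℝ) (hr0 : 0 < r) :
    ∃ N : ℕ, 2 ≤ N ∧
      ∀ (m : ℕ → ℕ) (b ε : ℕ → ℕ → ℤ),
        (∀ i, 1 ≤ m i) →
        (∀ i, ∀ j < m i, 2 ≤ b i j) →
        (∀ i, ∀ j < m i, ε i j = 1 ∨ ε i j = -1) →
        ((N : ℤ) ≤ b 0 0) →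
        (∀ i, ∀ j, j + 1 < m i → (b i j) ^ 2 ≤ b i (j + 1)) →
        (∀ i, (scfDen (b i) (ε i) (m i + 1)) ^ 2 ≤ b (i + 1) 0) →
        ∀ (i : ℕ) (z : ℂ),
          ‖z - (Complex.ofReal (scf (b i) (ε i) 0 (m i)) -
              Complex.I * Complex.ofReal
                (((∏ l ∈ Finset.range i, (scfDen (b l) (ε l) (m l + 1) : ℝ)) /
                    (scfDen (b i) (ε i) (m i + 1) : ℝ)) * (Real.log 2 / (2 * π))))‖ ≤
            (Real.log 2 / (2 * π)) *
              ((∏ l ∈ Finset.range i, (scfDen (b l) (ε l) (m l + 1) : ℝ)) /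
                (scfDen (b i) (ε i) (m i + 1) : ℝ)) →
          ((∀ n : ℕ, n + 2 ≤ m i →
              (∀ k < n, mGaussC^[k] z ≠ 0) ∧
              ‖mGaussC^[n] z‖ ≤ r ∧
              |(mGaussC^[n] z).im| ≤ |(mGaussC^[n] z).re|) ∧
            (∀ k < m i - 1, mGaussC^[k] z ≠ 0) ∧
            ‖mGaussC^[m i - 1] z‖ ≤ r) := by
  refine ⟨⌈2 / r⌉₊ + 4, by omega, fun m b ε hm hb2 hε hb00 hbsq hq i z hz => ?_⟩
  set K := ∏ l ∈ Finset.range i, (scfDen (b l) (ε l) (m l + 1) : ℝ)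
  have hK : 1 ≤ K := Finset.one_le_prod fun l _ => by
    rw [← tailDen_zero]; exact_mod_cast one_le_tailDen (hb2 l) (hε l) 0
  have hNK : ((⌈2 / r⌉₊ + 4 : ℕ) : ℝ) * K ≤ b i 0 := by
    have h := natCast_mul_prod_scfDen_le hm hb2 hε hb00 hq i
    simp only [K]
    exact_mod_cast h
  have hN : 2 / r + 4 ≤ ((⌈2 / r⌉₊ + 4 : ℕ) : ℝ) := by
    push_cast
    linarith [Nat.le_ceil (2 / r)]
  have hz' : z ∈ horodisk (scf (b i) (ε i) 0 (m i))
      (Real.log 2 / (2 * π) * K / tailDen (b i) (ε i) (m i) 0) := by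
    rw [tailDen_zero, horodisk, mem_closedBall_iff_norm]
    convert hz using 1 <;> ring_nf
  obtain ⟨hcone, hbound⟩ := iterate_mGaussC_bounds_of_le (hb2 i) (hε i) (hbsq i) hr0 hK
    (by positivity) log_two_div_two_pi_le (by nlinarith) hz'
  exact ⟨fun n hn => ⟨fun k hk => (hbound k (by omega)).1, (hbound n (by omega)).2,
    hcone n hn⟩, fun k hk => (hbound k (by omega)).1, (hbound _ (by have := hm i; omega)).2⟩

/-- For every `r ∈ (0, 1/2)` there is `N ≥ 2` such that for every sequence of
rational numbers `⟨m_i : b_{i,j} : ε_{i,j}⟩` in the quadratic-growth class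
`QG_N` (i.e. `b_{0,0} ≥ N`, `b_{i,j+1} ≥ b_{i,j}²` and `b_{i+1,0} ≥ q_i²`, where
`p_i/q_i = [⟨b_{i,j} : ε_{i,j}⟩_j]`, all indices 0-based), every `i`, and every
`z` in the closed disk of radius `(log 2/(2π))·(k_i/q_i)` centered at
`p_i/q_i - 𝑖 (k_i/q_i)(log 2)/(2π)` (with `k_i = ∏_{l<i} q_l`):
(a) for `0 ≤ n ≤ m_i - 2` the iterate `G^n(z)` is defined (the orbit does not
pass through `0`), `|G^n(z)| ≤ r`, and `|Im G^n(z)| ≤ |Re G^n(z)|`;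
(b) `G^{m_i - 1}(z)` is defined and `|G^{m_i - 1}(z)| ≤ r`. -/
theorem rationals_with_quadratic_growth (r : ℝ) (hr0 : 0 < r) (hr : r < 1 / 2) :
    ∃ N : ℕ, 2 ≤ N ∧
      ∀ (m : ℕ → ℕ) (b ε : ℕ → ℕ → ℤ),
        (∀ i, 1 ≤ m i) →
        (∀ i, ∀ j < m i, 2 ≤ b i j) →
        (∀ i, ∀ j < m i, ε i j = 1 ∨ ε i j = -1) →
        ((N : ℤ) ≤ b 0 0) →
        (∀ i, ∀ j, j + 1 < m i → (b i j) ^ 2 ≤ b i (j + 1)) →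
        (∀ i, (scfDen (b i) (ε i) (m i + 1)) ^ 2 ≤ b (i + 1) 0) →
        ∀ (i : ℕ) (z : ℂ),
          ‖z - (Complex.ofReal (scf (b i) (ε i) 0 (m i)) -
              Complex.I * Complex.ofReal
                (((∏ l ∈ Finset.range i, (scfDen (b l) (ε l) (m l + 1) : ℝ)) /
                    (scfDen (b i) (ε i) (m i + 1) : ℝ)) * (Real.log 2 / (2 * π))))‖ ≤
            (Real.log 2 / (2 * π)) *
              ((∏ l ∈ Finset.range i, (scfDen (b l) (ε l) (m l + 1) : ℝ)) /
                (scfDen (b i) (ε i) (m i + 1) : ℝ)) →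
          ((∀ n : ℕ, n + 2 ≤ m i →
              (∀ k < n, mGaussC^[k] z ≠ 0) ∧
              ‖mGaussC^[n] z‖ ≤ r ∧
              |(mGaussC^[n] z).im| ≤ |(mGaussC^[n] z).re|) ∧
            (∀ k < m i - 1, mGaussC^[k] z ≠ 0) ∧
            ‖mGaussC^[m i - 1] z‖ ≤ r) :=
  rationals_with_quadratic_growth_general r hr0
end

section
/- For all reals B₁ > 0 and K > 0 there exists a real B₄ ≥ 1 such that for all α, β ∈ ℂ satisfying: 0 < |α| ≤ 1/2, |Re α| ≥ |Im α|, β ≠ 0, Re β ∈ [−1/2, 1/2], |Im β| ≤ K, and |1/(1 − e^{2πiα}) + 1/(1 − e^{2πiβ})| ≤ B₁, one has |α|/B₄ ≤ |β| ≤ B₄ |α|. -/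
/-!
On a rectangle `|Re z| ≤ 1/2`, `|Im z| ≤ T` the only zero of `1 - e^{2πiz}` is the simple zero
at `0`, so by compactness `|1 - e^{2πiz}|` is comparable to `|z|` there; `α` and `β` both lie in
such a rectangle. Writing `a`, `b` for the two denominators, `|1/a| ≤ B₁ + |1/b|`: either
`1/|a| ≥ 2B₁`, and then `|b| ≤ 2|a|`, or `|a|`, hence `|α|`, is bounded below while `|β|` is
bounded above on the rectangle. Exchanging `α` and `β` gives the other inequality.
-/

open Real

theorem IsCompact.exists_pos_mul_norm_sub_le_norm_sub_le_mul
    {𝕜 E : Type*} [NontriviallyNormedField 𝕜] [NormedAddCommGroup E] [NormedSpace 𝕜 E]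
    {f : 𝕜 → E} (hf : Differentiable 𝕜 f) {S : Set 𝕜} (hS : IsCompact S) {a : 𝕜}
    (ha : deriv f a ≠ 0) (hinj : ∀ z ∈ S, f z = f a → z = a) :
    ∃ c > 0, ∃ C, ∀ z ∈ S, c * ‖z - a‖ ≤ ‖f z - f a‖ ∧ ‖f z - f a‖ ≤ C * ‖z - a‖ := by
  have hg : ContinuousOn (fun z => ‖dslope f a z‖) S :=
    ((continuousOn_dslope Filter.univ_mem).2 ⟨hf.continuous.continuousOn, hf a⟩).norm.mono
      (Set.subset_univ S)
  have hg0 : ∀ z ∈ S, 0 < ‖dslope f a z‖ := by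
    refine fun z hz => norm_pos_iff.2 fun h0 => ?_
    obtain rfl : z = a :=
      hinj z hz (by simpa [h0, sub_eq_zero, eq_comm] using sub_smul_dslope f a z)
    exact ha (dslope_same f z ▸ h0)
  obtain ⟨c, hc, hcg⟩ := hS.exists_forall_le' hg hg0
  obtain ⟨C, hCg⟩ := hS.exists_bound_of_continuousOn hg
  refine ⟨c, hc, C, fun z hz => ?_⟩
  rw [← sub_smul_dslope, norm_smul, mul_comm c, mul_comm C]
  exact ⟨mul_le_mul_of_nonneg_left (hcg z hz) (norm_nonneg _),
    mul_le_mul_of_nonneg_left (norm_norm (dslope f a z) ▸ hCg z hz) (norm_nonneg _)⟩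

theorem exists_pos_mul_norm_le_norm_one_sub_exp_le_mul (T : ℝ) :
    ∃ c > 0, ∃ C, ∀ z ∈ Set.Icc (-(1 / 2) : ℝ) (1 / 2) ×ℂ Set.Icc (-T) T,
      c * ‖z‖ ≤ ‖1 - Complex.exp (2 * π * Complex.I * z)‖ ∧
        ‖1 - Complex.exp (2 * π * Complex.I * z)‖ ≤ C * ‖z‖ := by
  set f : ℂ → ℂ := fun z => 1 - Complex.exp (2 * π * Complex.I * z)
  have hf (z : ℂ) :
      HasDerivAt f (-(Complex.exp (2 * π * Complex.I * z) * (2 * π * Complex.I))) z :=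
    (((hasDerivAt_id z).const_mul _).cexp.const_sub 1).congr_deriv (by simp)
  have hderiv : deriv f 0 ≠ 0 := by simp [(hf 0).deriv, Complex.I_ne_zero]
  have hinj : ∀ z ∈ Set.Icc (-(1 / 2) : ℝ) (1 / 2) ×ℂ Set.Icc (-T) T, f z = f 0 → z = 0 := by
    rintro z ⟨hre, -⟩ hz
    simp only [f, mul_zero, Complex.exp_zero, sub_self] at hz
    obtain ⟨n, hn⟩ := Complex.exp_eq_one_iff.1 (by linear_combination -hz)
    have hzn : z = n := by
      have : (2 * π * Complex.I : ℂ) ≠ 0 := by simp [Complex.I_ne_zero]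
      exact mul_left_cancel₀ this (by rw [hn]; ring)
    have hn0 : n = 0 := by
      have hre' : (n : ℝ) ∈ Set.Icc (-(1 / 2)) (1 / 2) := by simpa [hzn] using hre
      have : |(n : ℝ)| < 1 := (abs_le.2 hre').trans_lt (by norm_num)
      exact Int.abs_lt_one_iff.1 (by exact_mod_cast this)
    simp [hzn, hn0]
  obtain ⟨c, hc, C, hcC⟩ :=
    (isCompact_Icc.reProdIm isCompact_Icc).exists_pos_mul_norm_sub_le_norm_sub_le_mul
      (fun z => (hf z).differentiableAt) hderiv hinj
  exact ⟨c, hc, C, fun z hz => by simpa [f] using hcC z hz⟩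

theorem norm_le_mul_norm_of_norm_inv_add_inv_le {E 𝕜 : Type*} [NormedAddCommGroup E]
    [NormedDivisionRing 𝕜] {f : E → 𝕜} {S : Set E} {c C r B : ℝ} (hc : 0 < c)
    (hf : ∀ z ∈ S, c * ‖z‖ ≤ ‖f z‖ ∧ ‖f z‖ ≤ C * ‖z‖) (hr : ∀ z ∈ S, ‖z‖ ≤ r) {x y : E}
    (hx : x ∈ S) (hy : y ∈ S) (hx0 : x ≠ 0) (hy0 : y ≠ 0) (h : ‖(f x)⁻¹ + (f y)⁻¹‖ ≤ B) :
    ‖y‖ ≤ max (2 * C / c) (2 * B * C * r) * ‖x‖ := by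
  have hfx : 0 < ‖f x‖ := (mul_pos hc (norm_pos_iff.2 hx0)).trans_le (hf x hx).1
  have hfy : 0 < ‖f y‖ := (mul_pos hc (norm_pos_iff.2 hy0)).trans_le (hf y hy).1
  have hinv : ‖f x‖⁻¹ ≤ B + ‖f y‖⁻¹ := by
    have := norm_sub_le ((f x)⁻¹ + (f y)⁻¹) (f y)⁻¹
    rw [add_sub_cancel_right, norm_inv, norm_inv] at this
    linarith
  by_cases hB : 2 * B ≤ ‖f x‖⁻¹
  · have hfyx : ‖f y‖ ≤ 2 * ‖f x‖ := by
      rw [← inv_le_inv₀ (by positivity) hfy, mul_inv]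
      linarith
    calc ‖y‖ ≤ 2 * C / c * ‖x‖ := by
          rw [div_mul_eq_mul_div, le_div_iff₀ hc]
          nlinarith [(hf x hx).2, (hf y hy).1]
      _ ≤ _ := by gcongr; exact le_max_left _ _
  · have hBx : 1 < 2 * B * C * ‖x‖ := by
      have hB0 : 0 < B := by have := inv_pos.2 hfx; linarith
      have : 1 < 2 * B * ‖f x‖ := by
        rw [not_le, inv_lt_iff_one_lt_mul₀ hfx] at hB; linarith
      nlinarith [(hf x hx).2]
    have hr0 : 0 ≤ r := (norm_nonneg y).trans (hr y hy)
    calc ‖y‖ ≤ r * 1 := by simpa using hr y hy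
      _ ≤ r * (2 * B * C * ‖x‖) := by gcongr
      _ ≤ max (2 * C / c) (2 * B * C * r) * ‖x‖ := by
          rw [show r * (2 * B * C * ‖x‖) = 2 * B * C * r * ‖x‖ by ring]
          gcongr
          exact le_max_right _ _

theorem rotation_numbers_comparable_general (B₁ K : ℝ) :
    ∃ B₄ : ℝ, 1 ≤ B₄ ∧
      ∀ α β : ℂ,
        0 < ‖α‖ → ‖α‖ ≤ 1 / 2 → |α.im| ≤ |α.re| →
        β ≠ 0 → β.re ∈ Set.Icc (-(1 / 2) : ℝ) (1 / 2) → |β.im| ≤ K →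
        ‖1 / (1 - Complex.exp (2 * ↑π * Complex.I * α)) +
            1 / (1 - Complex.exp (2 * ↑π * Complex.I * β))‖ ≤ B₁ →
        ‖α‖ / B₄ ≤ ‖β‖ ∧ ‖β‖ ≤ B₄ * ‖α‖ := by
  obtain ⟨c, hc, C, hf⟩ := exists_pos_mul_norm_le_norm_one_sub_exp_le_mul (max K (1 / 2))
  obtain ⟨r, hr⟩ := (isCompact_Icc.reProdIm isCompact_Icc).isBounded.exists_norm_le
  set S := Set.Icc (-(1 / 2) : ℝ) (1 / 2) ×ℂ Set.Icc (-max K (1 / 2)) (max K (1 / 2))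
  set M := max (2 * C / c) (2 * B₁ * C * r)
  refine ⟨max 1 M, le_max_left _ _, fun α β hα0 hα _ hβ0 hβre hβim hidx => ?_⟩
  have hαS : α ∈ S := by
    have := Complex.abs_re_le_norm α; have := Complex.abs_im_le_norm α
    exact ⟨abs_le.1 (by linarith), abs_le.1 (by linarith [le_max_right K (1 / 2)])⟩
  have hβS : β ∈ S := ⟨hβre, abs_le.1 (hβim.trans (le_max_left _ _))⟩
  simp only [one_div] at hidx
  constructor
  · rw [div_le_iff₀ (by positivity), mul_comm]
    calc ‖α‖ ≤ M * ‖β‖ := norm_le_mul_norm_of_norm_inv_add_inv_le hc hf hr hβS hαS hβ0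
          (norm_pos_iff.1 hα0) (by rwa [add_comm])
      _ ≤ max 1 M * ‖β‖ := by gcongr; exact le_max_right _ _
  · calc ‖β‖ ≤ M * ‖α‖ := norm_le_mul_norm_of_norm_inv_add_inv_le hc hf hr hαS hβS
          (norm_pos_iff.1 hα0) hβ0 hidx
      _ ≤ max 1 M * ‖α‖ := by gcongr; exact le_max_right _ _

/-- If `α` lies in the sector `0 < |α| ≤ 1/2`, `|Re α| ≥ |Im α|`, and `β ≠ 0`
lies in the strip `Re β ∈ [-1/2, 1/2]`, `|Im β| ≤ K`, and the index bound
`|1/(1 - e^{2πiα}) + 1/(1 - e^{2πiβ})| ≤ B₁` holds, then `|α|` and `|β|` are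
comparable: `|α|/B₄ ≤ |β| ≤ B₄|α|` for some `B₄` depending only on `B₁, K`. -/
theorem rotation_numbers_comparable (B₁ K : ℝ) (hB₁ : 0 < B₁) (hK : 0 < K) :
    ∃ B₄ : ℝ, 1 ≤ B₄ ∧
      ∀ α β : ℂ,
        0 < ‖α‖ → ‖α‖ ≤ 1 / 2 → |α.im| ≤ |α.re| →
        β ≠ 0 → β.re ∈ Set.Icc (-(1 / 2) : ℝ) (1 / 2) → |β.im| ≤ K →
        ‖1 / (1 - Complex.exp (2 * ↑π * Complex.I * α)) +
            1 / (1 - Complex.exp (2 * ↑π * Complex.I * β))‖ ≤ B₁ →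
        ‖α‖ / B₄ ≤ ‖β‖ ∧ ‖β‖ ≤ B₄ * ‖α‖ :=
  rotation_numbers_comparable_general B₁ K
end
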